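/- Fix n ∈ ℕ, n ≥ 1, and let 𝒜₀ⁿ = {f ∈ H^∞ : f(0) = f′(0) = ⋯ = f^{(n−1)}(0) = 0}. A map T : 𝒜₀ⁿ → 𝒜₀ⁿ is an algebra automorphism (bijective, ℂ-linear and multiplicative) if and only if there exists θ ∈ ℝ such that T f = f ∘ (z ↦ e^{iθ}z) for all f ∈ 𝒜₀ⁿ. -/

import Mathlib

open Complex Metric Set

local notation "𝔻" => Complex.UnitDisc

/-- The closed unit disc, as a subset of `ℂ`. -/
def cD : Set ℂ := Metric.closedBall 0 1

/-- A function on the open unit disc is analytic (holomorphic):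
it is the restriction of a function differentiable on the open unit ball. -/
def HolOn (f : 𝔻 → ℂ) : Prop :=
  ∃ F : ℂ → ℂ, DifferentiableOn ℂ F (Metric.ball 0 1) ∧ ∀ z : 𝔻, F ↑z = f z

/-- Membership in `H^∞`, the algebra of bounded analytic functions on the unit disc. -/
def MemHinf (f : 𝔻 → ℂ) : Prop :=
  HolOn f ∧ ∃ M : ℝ, ∀ z : 𝔻, ‖f z‖ ≤ M

/-- Membership in the disc algebra `A(𝔻)`: continuous on the closed unit disc,
analytic in its interior. -/
def MemDiscAlg (f : ↥cD → ℂ) : Prop :=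
  ∃ F : ℂ → ℂ, ContinuousOn F cD ∧ DifferentiableOn ℂ F (Metric.ball 0 1) ∧
    ∀ z : ↥cD, F ↑z = f z

/-- `φ ∈ Aut(𝔻)`: a bijective analytic self-map of the unit disc. -/
def IsDiscAut (φ : 𝔻 → 𝔻) : Prop :=
  (∃ F : ℂ → ℂ, DifferentiableOn ℂ F (Metric.ball 0 1) ∧ ∀ z : 𝔻, F ↑z = ↑(φ z)) ∧
  Function.Bijective φ

/-- A Möbius automorphism of the unit disc, given by its global formula
`Φ z = η (a - z) / (1 - conj a * z)` with `|a| < 1`, `|η| = 1`; this is the analytic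
extension to (a neighbourhood of) the closed unit disc of a disc automorphism. -/
def IsMobius (Φ : ℂ → ℂ) : Prop :=
  ∃ a η : ℂ, ‖a‖ < 1 ∧ ‖η‖ = 1 ∧
    ∀ z : ℂ, Φ z = η * (a - z) / (1 - (starRingEnd ℂ) a * z)

/-- `T` is an algebra automorphism of the set `A` of complex-valued functions:
a bijective, `ℂ`-linear and multiplicative self-map of `A`. -/
def IsAlgAutOn {ι : Type} (A : Set (ι → ℂ)) (T : (ι → ℂ) → (ι → ℂ)) : Prop :=
  (∀ f ∈ A, T f ∈ A) ∧
  (∀ f ∈ A, ∀ g ∈ A, T (f + g) = T f + T g) ∧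
  (∀ (c : ℂ), ∀ f ∈ A, T (c • f) = c • T f) ∧
  (∀ f ∈ A, ∀ g ∈ A, T (f * g) = T f * T g) ∧
  Set.InjOn T A ∧ Set.SurjOn T A A

/-- The subalgebra `ψ H^∞ = {ψ · g : g ∈ H^∞}`. -/
def psiH (ψ : 𝔻 → ℂ) : Set (𝔻 → ℂ) :=
  {f | ∃ g, MemHinf g ∧ f = fun z => ψ z * g z}

/-- The subalgebra `ψ A(𝔻) = {ψ · g : g ∈ A(𝔻)}`. -/
def psiA (ψ : ↥cD → ℂ) : Set (↥cD → ℂ) :=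
  {f | ∃ g, MemDiscAlg g ∧ f = fun z => ψ z * g z}

/-- The composition operator `C_φ : f ↦ f ∘ φ` is a well-defined algebra automorphism
of the set `A` (it is automatically linear and multiplicative). -/
def CompAutOn (A : Set (𝔻 → ℂ)) (φ : 𝔻 → 𝔻) : Prop :=
  (∀ f ∈ A, f ∘ φ ∈ A) ∧ Set.InjOn (fun f => f ∘ φ) A ∧ Set.SurjOn (fun f => f ∘ φ) A A

/-- The Möbius factor `τ_a(z) = (a - z)/(1 - conj a · z)`. -/
noncomputable def mobius (a z : ℂ) : ℂ := (a - z) / (1 - (starRingEnd ℂ) a * z)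

/-- `f` has a zero of order (multiplicity) `k` at `w`:
`f z = (z - w)^k g z` with `g` analytic and `g w ≠ 0`. -/
def ZeroOrderAt (f : 𝔻 → ℂ) (w : 𝔻) (k : ℕ) : Prop :=
  ∃ g : 𝔻 → ℂ, HolOn g ∧ g w ≠ 0 ∧ ∀ z : 𝔻, f z = ((z : ℂ) - (w : ℂ)) ^ k * g z

/-- `g` is an invertible element of `H^∞`. -/
def InvHinf (g : 𝔻 → ℂ) : Prop :=
  MemHinf g ∧ ∃ h : 𝔻 → ℂ, MemHinf h ∧ ∀ z, g z * h z = 1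

/-- `g` is an invertible element of the disc algebra `A(𝔻)`. -/
def InvDiscAlg (g : ↥cD → ℂ) : Prop :=
  MemDiscAlg g ∧ ∃ h : ↥cD → ℂ, MemDiscAlg h ∧ ∀ z, g z * h z = 1

/-- The subalgebra `𝒜₀ⁿ = {f ∈ H^∞ : f(0) = f'(0) = ⋯ = f^{(n-1)}(0) = 0}`. -/
def calAn (n : ℕ) : Set (𝔻 → ℂ) :=
  {f | MemHinf f ∧ ∃ F : ℂ → ℂ, DifferentiableOn ℂ F (Metric.ball 0 1) ∧
    (∀ z : 𝔻, F ↑z = f z) ∧ ∀ k < n, iteratedDeriv k F 0 = 0}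

/-!
For `v ≠ 0` the map `f ↦ T f v` is a character of `𝒜₀ⁿ = zⁿ H^∞` that does not vanish at `zⁿ`.
Such a character is evaluation at the point `ρ v = T (zⁿ⁺¹) v / T (zⁿ) v`: the identities
`(zⁿ⁺¹ - c zⁿ) · zⁿ (z - c)⁻¹ = zⁿ · zⁿ` and `f zⁿ zⁿ = (zⁿ⁺¹ - w zⁿ) · zⁿ q + f(w) zⁿ zⁿ`, with
`q = (f - f(w)) / (z - w) ∈ H^∞`, show `|ρ v| ≤ 1` and identify the character once `|ρ v| < 1`.
Surjectivity makes `T (zⁿ) / zⁿ` invertible in `H^∞`, so `ρ` is holomorphic on the whole disc;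
by the maximum modulus principle and injectivity it is not unimodular. Thus `T f = f ∘ ρ` with
`ρ(0) = 0`, and likewise `T⁻¹ f = f ∘ ψ`; since `ψ ∘ ρ = id`, the Schwarz lemma applied to both
maps makes `ρ` a rotation. Conversely, composition with a rotation preserves `𝒜₀ⁿ`.
-/

open Filter Topology

namespace Complex

lemma exists_eq_pow_mul_of_iteratedDeriv_eq_zero {U : Set ℂ} (hU : IsOpen U) (h0 : (0 : ℂ) ∈ U)
    {F : ℂ → ℂ} (hF : DifferentiableOn ℂ F U) {n : ℕ} (h : ∀ k < n, iteratedDeriv k F 0 = 0) :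
    ∃ G : ℂ → ℂ, DifferentiableOn ℂ G U ∧ ∀ z, F z = z ^ n * G z := by
  obtain ⟨G, hG0, hFG⟩ := (hF.analyticAt (hU.mem_nhds h0)).exists_eq_sum_add_pow_mul n
  have hFG' : ∀ z, F z = z ^ n * G z := fun z => by
    rw [hFG z, Finset.sum_eq_zero fun k hk => by rw [h k (Finset.mem_range.mp hk), smul_zero],
      zero_add, smul_eq_mul]
  refine ⟨G, fun z hz => ?_, hFG'⟩
  rcases eq_or_ne z 0 with rfl | hz0
  · exact hG0.differentiableAt.differentiableWithinAt
  · have hGF : G =ᶠ[𝓝 z] fun w => F w / w ^ n := by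
      filter_upwards [isOpen_ne.mem_nhds hz0] with w hw
      rw [hFG' w, mul_div_cancel_left₀ _ (pow_ne_zero _ hw)]
    exact (((hF.differentiableAt (hU.mem_nhds hz)).div (differentiableAt_pow n)
      (pow_ne_zero _ hz0)).congr_of_eventuallyEq hGF).differentiableWithinAt

lemma iteratedDeriv_eq_zero_of_eventuallyEq_pow_mul {F G : ℂ → ℂ} {n : ℕ}
    (hG : AnalyticAt ℂ G 0) (hFG : F =ᶠ[𝓝 0] fun z => z ^ n * G z) :
    ∀ k < n, iteratedDeriv k F 0 = 0 := by
  have hF : AnalyticAt ℂ F 0 := ((analyticAt_id.pow n).mul hG).congr hFG.symm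
  exact (natCast_le_analyticOrderAt_iff_iteratedDeriv_eq_zero hF).mp
    ((natCast_le_analyticOrderAt hF).mpr ⟨G, hG, by simp only [sub_zero, smul_eq_mul]; exact hFG⟩)

lemma norm_le_div_pow_of_norm_sub_pow_mul_le {G : ℂ → ℂ}
    (hG : DifferentiableOn ℂ G (ball 0 1)) {w : ℂ} (hw : ‖w‖ < 1) {k : ℕ} {M : ℝ}
    (hM : ∀ z ∈ ball (0 : ℂ) 1, ‖(z - w) ^ k * G z‖ ≤ M) {z₀ : ℂ} (hz₀ : z₀ ∈ ball (0 : ℂ) 1) :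
    ‖G z₀‖ ≤ M / (1 - ‖w‖) ^ k := by
  have hz₀' : ‖z₀‖ < 1 := mem_ball_zero_iff.mp hz₀
  have hcircle : ∀ r ∈ Ioo (max ‖w‖ ‖z₀‖) 1, ‖G z₀‖ ≤ M / (r - ‖w‖) ^ k := by
    rintro r ⟨hr, hr1⟩
    have hwr : 0 < r - ‖w‖ := sub_pos.mpr ((le_max_left _ _).trans_lt hr)
    have hr0 : r ≠ 0 := by linarith [norm_nonneg w]
    refine norm_le_of_forall_mem_frontier_norm_le isBounded_ball
      (hG.diffContOnCl_ball (closedBall_subset_ball hr1)) (fun z hz => ?_)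
      (by rw [closure_ball 0 hr0]
          exact mem_closedBall_zero_iff.mpr ((le_max_right _ _).trans hr.le))
    rw [frontier_ball 0 hr0, mem_sphere_zero_iff_norm] at hz
    have hzw : r - ‖w‖ ≤ ‖z - w‖ := hz ▸ norm_sub_norm_le z w
    rw [le_div_iff₀ (pow_pos hwr k), mul_comm]
    calc (r - ‖w‖) ^ k * ‖G z‖ ≤ ‖z - w‖ ^ k * ‖G z‖ := by gcongr
      _ = ‖(z - w) ^ k * G z‖ := by rw [norm_mul, norm_pow]
      _ ≤ M := hM z (mem_ball_zero_iff.mpr (hz ▸ hr1))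
  have hlim : Tendsto (fun r : ℝ => M / (r - ‖w‖) ^ k) (𝓝[<] 1) (𝓝 (M / (1 - ‖w‖) ^ k)) :=
    (continuousAt_const.div ((continuousAt_id.sub continuousAt_const).pow k)
      (pow_ne_zero _ (sub_pos.mpr hw).ne')).tendsto.mono_left nhdsWithin_le_nhds
  exact ge_of_tendsto hlim (eventually_of_mem (Ioo_mem_nhdsLT (max_lt hw hz₀')) hcircle)

lemma exists_eq_mul_of_comp_eq_self {Φ Ψ : ℂ → ℂ} (hΦ : DifferentiableOn ℂ Φ (ball 0 1))
    (hΨ : DifferentiableOn ℂ Ψ (ball 0 1)) (hΦb : MapsTo Φ (ball 0 1) (ball 0 1))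
    (hΨb : MapsTo Ψ (ball 0 1) (ball 0 1)) (hΦ0 : Φ 0 = 0) (hΨ0 : Ψ 0 = 0) {z₀ : ℂ}
    (hz₀ : z₀ ∈ ball (0 : ℂ) 1) (hz₀0 : z₀ ≠ 0) (h : Ψ (Φ z₀) = z₀) :
    ∃ η : ℂ, ‖η‖ = 1 ∧ ∀ z ∈ ball (0 : ℂ) 1, Φ z = η * z := by
  have hnorm : ‖Φ z₀‖ = ‖z₀‖ := by
    refine le_antisymm (norm_le_norm_of_mapsTo_ball hΦ (hΦb.mono_right ball_subset_closedBall)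
      hΦ0 (mem_ball_zero_iff.mp hz₀)) ?_
    calc ‖z₀‖ = ‖Ψ (Φ z₀)‖ := by rw [h]
      _ ≤ ‖Φ z₀‖ := norm_le_norm_of_mapsTo_ball hΨ (hΨb.mono_right ball_subset_closedBall)
        hΨ0 (mem_ball_zero_iff.mp (hΦb hz₀))
  have hslope : ‖dslope Φ 0 z₀‖ = 1 / 1 := by
    rw [dslope_of_ne _ hz₀0, slope_def_module, hΦ0, sub_zero, sub_zero, norm_smul, norm_inv, hnorm,
      inv_mul_cancel₀ (norm_ne_zero_iff.mpr hz₀0), div_one]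
  have hΦmaps : MapsTo Φ (ball 0 1) (closedBall (Φ 0) 1) := by
    rw [hΦ0]; exact hΦb.mono_right ball_subset_closedBall
  obtain ⟨η, hη, hΦη⟩ :=
    affine_of_mapsTo_ball_of_exists_norm_dslope_eq_div' hΦ hΦmaps ⟨z₀, hz₀, hslope⟩
  refine ⟨η, by rw [hη, div_one], fun z hz => ?_⟩
  simp only [hΦη hz, hΦ0, sub_zero, zero_add, smul_eq_mul, mul_comm]

end Complex

lemma Complex.UnitDisc.coe_mem_ball (z : 𝔻) : (z : ℂ) ∈ ball (0 : ℂ) 1 :=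
  mem_ball_zero_iff.mpr z.norm_lt_one

lemma Complex.UnitDisc.forall_mem_ball_iff {P : ℂ → Prop} :
    (∀ x ∈ ball (0 : ℂ) 1, P x) ↔ ∀ z : 𝔻, P z :=
  ⟨fun h z => h z z.coe_mem_ball, fun h x hx => h (mk x (mem_ball_zero_iff.mp hx))⟩

lemma Complex.UnitDisc.dense_setOf_coe_ne_zero : Dense {z : 𝔻 | (z : ℂ) ≠ 0} :=
  (dense_compl_singleton (0 : ℂ)).preimage (isOpen_ball.isOpenMap_subtype_val (s := ball 0 1))

def coord : 𝔻 → ℂ := (↑)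

@[simp] lemma coord_apply (z : 𝔻) : coord z = z := rfl

namespace HolOn

variable {f g : 𝔻 → ℂ}

lemma continuous (hf : HolOn f) : Continuous f := by
  obtain ⟨F, hF, hFf⟩ := hf
  have hfF : f = F ∘ (↑) := funext fun z => (hFf z).symm
  exact hfF ▸ hF.continuousOn.comp_continuous UnitDisc.continuous_coe UnitDisc.coe_mem_ball

lemma mul (hf : HolOn f) (hg : HolOn g) : HolOn (f * g) := by
  obtain ⟨F, hF, hFf⟩ := hf
  obtain ⟨G, hG, hGg⟩ := hg
  exact ⟨F * G, hF.mul hG, fun z => by simp only [Pi.mul_apply, hFf, hGg]⟩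

lemma pow (hf : HolOn f) (k : ℕ) : HolOn (f ^ k) := by
  obtain ⟨F, hF, hFf⟩ := hf
  exact ⟨F ^ k, hF.pow k, fun z => by simp only [Pi.pow_apply, hFf]⟩

lemma eq_of_forall_coe_ne_zero (hf : HolOn f) (hg : HolOn g)
    (h : ∀ z : 𝔻, (z : ℂ) ≠ 0 → f z = g z) : f = g :=
  hf.continuous.ext_on UnitDisc.dense_setOf_coe_ne_zero hg.continuous h

lemma norm_le_of_forall_coe_ne_zero (hf : HolOn f) {C : ℝ}
    (h : ∀ z : 𝔻, (z : ℂ) ≠ 0 → ‖f z‖ ≤ C) (z : 𝔻) : ‖f z‖ ≤ C :=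
  UnitDisc.dense_setOf_coe_ne_zero.induction h (isClosed_le hf.continuous.norm continuous_const) z

lemma eq_of_forall_norm_le (hf : HolOn f) {z₀ : 𝔻} (h : ∀ z, ‖f z‖ ≤ ‖f z₀‖) (z : 𝔻) :
    f z = f z₀ := by
  obtain ⟨F, hF, hFf⟩ := hf
  have hmax : IsMaxOn (norm ∘ F) (ball 0 1) (z₀ : ℂ) :=
    UnitDisc.forall_mem_ball_iff.mpr fun w => by
      simpa only [mem_ofPred_eq, Function.comp_apply, hFf] using h w
  have := eqOn_of_isPreconnected_of_isMaxOn_norm (convex_ball (0 : ℂ) 1).isPreconnected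
    isOpen_ball hF z₀.coe_mem_ball hmax z.coe_mem_ball
  rwa [Function.const_apply, hFf, hFf] at this

end HolOn

namespace MemHinf

variable {f g : 𝔻 → ℂ}

lemma exists_extension (hf : MemHinf f) :
    ∃ (F : ℂ → ℂ) (M : ℝ), DifferentiableOn ℂ F (ball 0 1) ∧ (∀ z : 𝔻, F z = f z) ∧
      ∀ x ∈ ball (0 : ℂ) 1, ‖F x‖ ≤ M := by
  obtain ⟨⟨F, hF, hFf⟩, M, hM⟩ := hf
  exact ⟨F, M, hF, hFf, UnitDisc.forall_mem_ball_iff.mpr fun z => hFf z ▸ hM z⟩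

lemma of_extension {F : ℂ → ℂ} (hF : DifferentiableOn ℂ F (ball 0 1)) (hFf : ∀ z : 𝔻, F z = f z)
    {M : ℝ} (hM : ∀ x ∈ ball (0 : ℂ) 1, ‖F x‖ ≤ M) : MemHinf f :=
  ⟨⟨F, hF, hFf⟩, M, fun z => hFf z ▸ hM z z.coe_mem_ball⟩

lemma add (hf : MemHinf f) (hg : MemHinf g) : MemHinf (f + g) := by
  obtain ⟨F, M, hF, hFf, hFM⟩ := hf.exists_extension
  obtain ⟨G, N, hG, hGg, hGN⟩ := hg.exists_extension
  exact of_extension (hF.add hG) (fun z => by simp only [Pi.add_apply, hFf, hGg])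
    fun x hx => (norm_add_le _ _).trans (add_le_add (hFM x hx) (hGN x hx))

lemma mul (hf : MemHinf f) (hg : MemHinf g) : MemHinf (f * g) := by
  obtain ⟨F, M, hF, hFf, hFM⟩ := hf.exists_extension
  obtain ⟨G, N, hG, hGg, hGN⟩ := hg.exists_extension
  exact of_extension (hF.mul hG) (fun z => by simp only [Pi.mul_apply, hFf, hGg])
    fun x hx => (norm_mul _ _).trans_le (mul_le_mul (hFM x hx) (hGN x hx) (norm_nonneg _)
      ((norm_nonneg _).trans (hFM x hx)))

lemma const (c : ℂ) : MemHinf fun _ => c :=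
  of_extension (differentiableOn_const c) (fun _ => rfl) fun _ _ => le_rfl

end MemHinf

def hInfty : Subalgebra ℂ (𝔻 → ℂ) where
  carrier := {f | MemHinf f}
  mul_mem' := MemHinf.mul
  add_mem' := MemHinf.add
  algebraMap_mem' := MemHinf.const

lemma coord_mem_hInfty : coord ∈ hInfty :=
  MemHinf.of_extension differentiableOn_id (fun _ => rfl) fun _ hx => (mem_ball_zero_iff.mp hx).le

lemma inv_coord_sub_mem_hInfty {c : ℂ} (hc : 1 < ‖c‖) :
    (fun z : 𝔻 => ((z : ℂ) - c)⁻¹) ∈ hInfty := by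
  have hlower : ∀ x ∈ ball (0 : ℂ) 1, ‖c‖ - 1 < ‖x - c‖ := fun x hx => by
    linarith [mem_ball_zero_iff.mp hx, norm_sub_norm_le c x, norm_sub_rev x c]
  refine MemHinf.of_extension (F := fun x => (x - c)⁻¹) (M := (‖c‖ - 1)⁻¹) (fun x hx => ?_)
    (fun _ => rfl) fun x hx => ?_
  · exact ((differentiableAt_id.sub_const c).inv
      (norm_pos_iff.mp ((sub_pos.mpr hc).trans (hlower x hx)))).differentiableWithinAt
  · rw [norm_inv]
    exact inv_anti₀ (sub_pos.mpr hc) (hlower x hx).le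

lemma exists_sub_eq_mul_of_mem_hInfty {f : 𝔻 → ℂ} (hf : f ∈ hInfty) (w : 𝔻) :
    ∃ q ∈ hInfty, ∀ z : 𝔻, f z - f w = ((z : ℂ) - w) * q z := by
  obtain ⟨F, M, hF, hFf, hFM⟩ := MemHinf.exists_extension hf
  set Q := dslope (fun x => F x - f w) w
  have hQ : DifferentiableOn ℂ Q (ball 0 1) :=
    (differentiableOn_dslope (isOpen_ball.mem_nhds w.coe_mem_ball)).mpr (hF.sub_const _)
  have hFQ : ∀ x, F x - f w = (x - w) * Q x := fun x => by
    rw [← smul_eq_mul, sub_smul_dslope, hFf, sub_self, sub_zero]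
  refine ⟨fun z => Q z, MemHinf.of_extension hQ (fun _ => rfl) fun x hx =>
    norm_le_div_pow_of_norm_sub_pow_mul_le hQ w.norm_lt_one (k := 1) (M := M + ‖f w‖)
      (fun y hy => ?_) hx, fun z => by rw [← hFf, hFQ]⟩
  rw [pow_one, ← hFQ]
  exact (norm_sub_le _ _).trans (add_le_add_left (hFM y hy) _)

lemma comp_smul_mem_hInfty {g : 𝔻 → ℂ} (hg : g ∈ hInfty) (c : Circle) :
    (fun z => g (c • z)) ∈ hInfty := by
  obtain ⟨G, M, hG, hGg, hGM⟩ := MemHinf.exists_extension hg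
  have hmaps : MapsTo (fun x => (c : ℂ) * x) (ball 0 1) (ball 0 1) := fun x hx => by
    simpa [mem_ball_zero_iff, norm_mul, Circle.norm_coe] using hx
  exact MemHinf.of_extension (hG.comp (differentiableOn_id.const_mul _) hmaps)
    (fun z => by simp only [Function.comp_apply, ← UnitDisc.coe_circle_smul, hGg])
    fun x hx => hGM _ (hmaps hx)

lemma mem_calAn_iff {n : ℕ} {f : 𝔻 → ℂ} : f ∈ calAn n ↔ ∃ g ∈ hInfty, f = coord ^ n * g := by
  constructor
  · rintro ⟨⟨-, M, hM⟩, F, hF, hFf, hder⟩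
    obtain ⟨G, hG, hFG⟩ := exists_eq_pow_mul_of_iteratedDeriv_eq_zero isOpen_ball
      (mem_ball_self one_pos) hF hder
    have hGM : ∀ x ∈ ball (0 : ℂ) 1, ‖G x‖ ≤ M := fun x hx => by
      simpa using norm_le_div_pow_of_norm_sub_pow_mul_le hG (w := 0) (k := n) (by simp)
        (UnitDisc.forall_mem_ball_iff.mpr fun z => by rw [sub_zero, ← hFG, hFf]; exact hM z) hx
    exact ⟨fun z => G z, MemHinf.of_extension hG (fun _ => rfl) hGM,
      funext fun z => by simp [← hFf, hFG]⟩
  · rintro ⟨g, hg, rfl⟩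
    obtain ⟨G, M, hG, hGg, -⟩ := MemHinf.exists_extension hg
    exact ⟨hInfty.mul_mem (hInfty.pow_mem coord_mem_hInfty n) hg, fun x => x ^ n * G x,
      (differentiableOn_pow n).mul hG, fun z => by simp [hGg],
      iteratedDeriv_eq_zero_of_eventuallyEq_pow_mul
        (hG.analyticAt (isOpen_ball.mem_nhds (mem_ball_self one_pos))) EventuallyEq.rfl⟩

def calAnSubalgebra (n : ℕ) : NonUnitalSubalgebra ℂ (𝔻 → ℂ) where
  carrier := calAn n
  add_mem' {f g} hf hg := by
    obtain ⟨a, ha, rfl⟩ := mem_calAn_iff.mp hf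
    obtain ⟨b, hb, rfl⟩ := mem_calAn_iff.mp hg
    exact mem_calAn_iff.mpr ⟨a + b, add_mem ha hb, (mul_add _ _ _).symm⟩
  zero_mem' := mem_calAn_iff.mpr ⟨0, zero_mem _, (mul_zero _).symm⟩
  mul_mem' {f g} hf hg := by
    obtain ⟨a, ha, rfl⟩ := mem_calAn_iff.mp hf
    obtain ⟨b, hb, rfl⟩ := mem_calAn_iff.mp hg
    exact mem_calAn_iff.mpr ⟨a * (coord ^ n * b),
      mul_mem ha (mul_mem (pow_mem coord_mem_hInfty n) hb), by ring⟩
  smul_mem' c f hf := by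
    obtain ⟨a, ha, rfl⟩ := mem_calAn_iff.mp hf
    exact mem_calAn_iff.mpr ⟨c • a, hInfty.smul_mem ha c, (mul_smul_comm _ _ _).symm⟩

lemma coord_pow_mem_calAn {n m : ℕ} (h : n ≤ m) : coord ^ m ∈ calAn n :=
  mem_calAn_iff.mpr ⟨coord ^ (m - n), pow_mem coord_mem_hInfty _, by rw [← pow_add,
    Nat.add_sub_cancel' h]⟩

lemma apply_zero_of_mem_calAn {n : ℕ} (hn : n ≠ 0) {f : 𝔻 → ℂ} (hf : f ∈ calAn n) : f 0 = 0 := by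
  obtain ⟨g, -, rfl⟩ := mem_calAn_iff.mp hf
  simp [zero_pow hn]

lemma comp_smul_mem_calAn {n : ℕ} {f : 𝔻 → ℂ} (hf : f ∈ calAn n) (c : Circle) :
    (fun z => f (c • z)) ∈ calAn n := by
  obtain ⟨g, hg, rfl⟩ := mem_calAn_iff.mp hf
  refine mem_calAn_iff.mpr ⟨(c : ℂ) ^ n • fun z => g (c • z),
    hInfty.smul_mem (comp_smul_mem_hInfty hg c) _, funext fun z => ?_⟩
  simp only [Pi.mul_apply, Pi.pow_apply, coord_apply, Pi.smul_apply, smul_eq_mul,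
    UnitDisc.coe_circle_smul]
  ring

lemma eq_of_forall_mem_calAn_apply_eq {n : ℕ} {a b : 𝔻} (h : ∀ f ∈ calAn n, f a = f b) :
    a = b := by
  have hn : (a : ℂ) ^ n = (b : ℂ) ^ n := h _ (coord_pow_mem_calAn le_rfl)
  have hn1 : (a : ℂ) ^ (n + 1) = (b : ℂ) ^ (n + 1) := h _ (coord_pow_mem_calAn n.le_succ)
  apply UnitDisc.coe_injective
  rcases eq_or_ne (a : ℂ) 0 with ha | ha
  · rw [ha, zero_pow n.succ_ne_zero, eq_comm, pow_eq_zero_iff n.succ_ne_zero] at hn1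
    rw [ha, hn1]
  · rw [pow_succ, pow_succ, hn] at hn1
    exact mul_left_cancel₀ (hn ▸ pow_ne_zero n ha) hn1

structure IsCharacterOn {ι : Type*} (A : Set (ι → ℂ)) (χ : (ι → ℂ) → ℂ) : Prop where
  map_add : ∀ f ∈ A, ∀ g ∈ A, χ (f + g) = χ f + χ g
  map_smul : ∀ (c : ℂ), ∀ f ∈ A, χ (c • f) = c * χ f
  map_mul : ∀ f ∈ A, ∀ g ∈ A, χ (f * g) = χ f * χ g

namespace IsCharacterOn

variable {n : ℕ} {χ : (𝔻 → ℂ) → ℂ} (hχ : IsCharacterOn (calAn n) χ)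
include hχ

lemma map_coord_pow_succ_add_smul_eq_zero {c : ℂ}
    (hc : χ (coord ^ (n + 1)) = c * χ (coord ^ n)) :
    χ (coord ^ (n + 1) + (-c) • coord ^ n) = 0 := by
  have hn := coord_pow_mem_calAn (le_refl n)
  rw [hχ.map_add _ (coord_pow_mem_calAn n.le_succ) _ ((calAnSubalgebra n).smul_mem _ hn),
    hχ.map_smul _ _ hn, hc]
  ring

lemma norm_le_one (h0 : χ (coord ^ n) ≠ 0) {c : ℂ}
    (hc : χ (coord ^ (n + 1)) = c * χ (coord ^ n)) : ‖c‖ ≤ 1 := by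
  by_contra! hc1
  set u := coord ^ (n + 1) + (-c) • coord ^ n
  set v := coord ^ n * fun z : 𝔻 => ((z : ℂ) - c)⁻¹
  have hn := coord_pow_mem_calAn (le_refl n)
  have hu : u ∈ calAn n :=
    (calAnSubalgebra n).add_mem (coord_pow_mem_calAn n.le_succ) ((calAnSubalgebra n).smul_mem _ hn)
  have hv : v ∈ calAn n := mem_calAn_iff.mpr ⟨_, inv_coord_sub_mem_hInfty hc1, rfl⟩
  have huv : u * v = coord ^ n * coord ^ n := funext fun z => by
    have hzc : (z : ℂ) - c ≠ 0 := sub_ne_zero.mpr fun hzc =>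
      (z.norm_lt_one.trans hc1).ne (congrArg norm hzc)
    simp only [u, v, Pi.mul_apply, Pi.add_apply, Pi.smul_apply, Pi.pow_apply, coord_apply,
      smul_eq_mul]
    field_simp
    ring
  apply h0
  rw [← mul_self_eq_zero, ← hχ.map_mul _ hn _ hn, ← huv, hχ.map_mul _ hu _ hv,
    hχ.map_coord_pow_succ_add_smul_eq_zero hc, zero_mul]

lemma apply_eq (h0 : χ (coord ^ n) ≠ 0) {w : 𝔻}
    (hw : χ (coord ^ (n + 1)) = w * χ (coord ^ n)) {f : 𝔻 → ℂ} (hf : f ∈ calAn n) :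
    χ f = f w := by
  obtain ⟨q, hq, hfq⟩ := exists_sub_eq_mul_of_mem_hInfty hf.1 w
  set u := coord ^ (n + 1) + (-(w : ℂ)) • coord ^ n
  set p := coord ^ n
  have hn : p ∈ calAn n := coord_pow_mem_calAn (le_refl n)
  have hu : u ∈ calAn n :=
    (calAnSubalgebra n).add_mem (coord_pow_mem_calAn n.le_succ) ((calAnSubalgebra n).smul_mem _ hn)
  have hpq : p * q ∈ calAn n := mem_calAn_iff.mpr ⟨q, hq, rfl⟩
  have hpp : p * p ∈ calAn n := (calAnSubalgebra n).mul_mem hn hn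
  have hid : f * (p * p) = u * (p * q) + f w • (p * p) := funext fun z => by
    simp only [u, p, Pi.mul_apply, Pi.add_apply, Pi.smul_apply, Pi.pow_apply, coord_apply,
      smul_eq_mul]
    linear_combination ((z : ℂ) ^ n * (z : ℂ) ^ n) * hfq z
  have key : χ f * (χ p * χ p) = f w * (χ p * χ p) := by
    rw [← hχ.map_mul _ hn _ hn, ← hχ.map_mul _ hf _ hpp, ← hχ.map_smul _ _ hpp, hid,
      hχ.map_add _ ((calAnSubalgebra n).mul_mem hu hpq) _ ((calAnSubalgebra n).smul_mem _ hpp),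
      hχ.map_mul _ hu _ hpq, hχ.map_coord_pow_succ_add_smul_eq_zero hw, zero_mul, zero_add]
  exact mul_right_cancel₀ (mul_ne_zero h0 h0) key

end IsCharacterOn

namespace IsAlgAutOn

variable {ι : Type} {A : Set (ι → ℂ)} {T : (ι → ℂ) → (ι → ℂ)}

lemma mapsTo (hT : IsAlgAutOn A T) : MapsTo T A A := hT.1

lemma map_add (hT : IsAlgAutOn A T) : ∀ f ∈ A, ∀ g ∈ A, T (f + g) = T f + T g := hT.2.1

lemma map_smul (hT : IsAlgAutOn A T) : ∀ (c : ℂ), ∀ f ∈ A, T (c • f) = c • T f := hT.2.2.1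

lemma map_mul (hT : IsAlgAutOn A T) : ∀ f ∈ A, ∀ g ∈ A, T (f * g) = T f * T g := hT.2.2.2.1

lemma injOn (hT : IsAlgAutOn A T) : InjOn T A := hT.2.2.2.2.1

lemma surjOn (hT : IsAlgAutOn A T) : SurjOn T A A := hT.2.2.2.2.2

lemma isCharacterOn_apply (hT : IsAlgAutOn A T) (v : ι) : IsCharacterOn A fun f => T f v where
  map_add f hf g hg := congrFun (hT.map_add f hf g hg) v
  map_smul c f hf := congrFun (hT.map_smul c f hf) v
  map_mul f hf g hg := congrFun (hT.map_mul f hf g hg) v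

end IsAlgAutOn

lemma IsAlgAutOn.exists_rightInverse {ι : Type} {A : NonUnitalSubalgebra ℂ (ι → ℂ)}
    {T : (ι → ℂ) → (ι → ℂ)} (hT : IsAlgAutOn A T) :
    ∃ S, IsAlgAutOn A S ∧ ∀ f ∈ A, T (S f) = f := by
  set S := Function.invFunOn T A
  have hSA : MapsTo S A A := hT.surjOn.mapsTo_invFunOn
  have hTS : ∀ f ∈ A, T (S f) = f := hT.surjOn.rightInvOn_invFunOn
  have hST : ∀ g ∈ A, S (T g) = g := hT.injOn.leftInvOn_invFunOn
  have hS_eq : ∀ {f g}, g ∈ A → T g = f → S f = g := fun hg h => h ▸ hST _ hg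
  refine ⟨S, ⟨hSA, fun f hf g hg => ?_, fun c f hf => ?_, fun f hf g hg => ?_,
    fun f hf g hg h => ?_, fun f hf => ⟨T f, hT.mapsTo hf, hST f hf⟩⟩, hTS⟩
  · exact hS_eq (add_mem (hSA hf) (hSA hg))
      (by rw [hT.map_add _ (hSA hf) _ (hSA hg), hTS f hf, hTS g hg])
  · exact hS_eq (A.smul_mem c (hSA hf)) (by rw [hT.map_smul _ _ (hSA hf), hTS f hf])
  · exact hS_eq (mul_mem (hSA hf) (hSA hg))
      (by rw [hT.map_mul _ (hSA hf) _ (hSA hg), hTS f hf, hTS g hg])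
  · rw [← hTS f hf, ← hTS g hg, h]

lemma isAlgAutOn_of_eq_comp_equiv {ι : Type} {A : NonUnitalSubalgebra ℂ (ι → ℂ)} (e : ι ≃ ι)
    (he : ∀ f ∈ A, f ∘ e ∈ A) (he' : ∀ f ∈ A, f ∘ e.symm ∈ A) {T : (ι → ℂ) → (ι → ℂ)}
    (hT : ∀ f ∈ A, T f = f ∘ e) : IsAlgAutOn A T := by
  refine ⟨fun f hf => hT f hf ▸ he f hf, fun f hf g hg => ?_, fun c f hf => ?_,
    fun f hf g hg => ?_, fun f hf g hg hfg => ?_, fun f hf => ⟨f ∘ e.symm, he' f hf, ?_⟩⟩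
  · rw [hT _ (add_mem hf hg), hT f hf, hT g hg]; rfl
  · rw [hT _ (A.smul_mem c hf), hT f hf]; rfl
  · rw [hT _ (mul_mem hf hg), hT f hf, hT g hg]; rfl
  · rw [hT f hf, hT g hg] at hfg
    exact e.surjective.injective_comp_right hfg
  · rw [hT _ (he' f hf), Function.comp_assoc, Equiv.symm_comp_self, Function.comp_id]

lemma coord_pow_succ_ne_smul (n : ℕ) (c : ℂ) : coord ^ (n + 1) ≠ c • coord ^ n := by
  intro h
  have hc : ∀ z : 𝔻, (z : ℂ) ≠ 0 → (z : ℂ) = c := fun z hz => by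
    have := congrFun h z
    simp only [Pi.pow_apply, Pi.smul_apply, coord_apply, smul_eq_mul, pow_succ] at this
    exact mul_left_cancel₀ (pow_ne_zero n hz) (this.trans (mul_comm _ _))
  set z : 𝔻 := UnitDisc.mk (1 / 2) (by norm_num)
  have hz : (z : ℂ) ≠ 0 := by norm_num [z]
  have := (hc z hz).trans (hc (-z) (by simpa using hz)).symm
  rw [UnitDisc.coe_neg, eq_neg_iff_add_eq_zero, ← two_mul, mul_eq_zero] at this
  exact this.elim two_ne_zero hz

namespace IsAlgAutOn

variable {n : ℕ} {T : (𝔻 → ℂ) → (𝔻 → ℂ)} (hT : IsAlgAutOn (calAn n) T)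
include hT

lemma exists_map_coord_pow_eq_mul : ∃ β, InvHinf β ∧ T (coord ^ n) = coord ^ n * β := by
  have hn := coord_pow_mem_calAn (le_refl n)
  obtain ⟨m, hm, hTm⟩ := hT.surjOn hn
  obtain ⟨a, ha, rfl⟩ := mem_calAn_iff.mp hm
  have ham : a * (coord ^ n * a) ∈ calAn n := mem_calAn_iff.mpr ⟨a * a, mul_mem ha ha, by ring⟩
  obtain ⟨β, hβ, hTβ⟩ := mem_calAn_iff.mp (hT.mapsTo hn)
  obtain ⟨γ, hγ, hTγ⟩ := mem_calAn_iff.mp (hT.mapsTo ham)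
  have hsq : coord ^ n * coord ^ n * (β * γ) = coord ^ n * coord ^ n * 1 := by
    calc _ = T (coord ^ n) * T (a * (coord ^ n * a)) := by rw [hTβ, hTγ]; ring
      _ = T (coord ^ n * a) * T (coord ^ n * a) := by
        rw [← hT.map_mul _ hn _ ham, ← hT.map_mul _ hm _ hm]; congr 1; ring
      _ = _ := by rw [hTm, mul_one]
  have hβγ : β * γ = 1 := HolOn.eq_of_forall_coe_ne_zero (hβ.1.mul hγ.1) (MemHinf.const 1).1
    fun z hz => mul_left_cancel₀ (mul_ne_zero (pow_ne_zero n hz) (pow_ne_zero n hz)) (by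
      simpa only [Pi.mul_apply, Pi.pow_apply, coord_apply, Pi.one_apply] using congrFun hsq z)
  exact ⟨β, ⟨hβ, γ, hγ, congrFun hβγ⟩, hTβ⟩

lemma exists_map_coord_pow_succ_eq_mul :
    ∃ ρ : 𝔻 → ℂ, HolOn ρ ∧ T (coord ^ (n + 1)) = ρ * T (coord ^ n) ∧
      ∀ v : 𝔻, (v : ℂ) ≠ 0 → T (coord ^ n) v ≠ 0 := by
  obtain ⟨β, ⟨hβ, γ, hγ, hβγ⟩, hTβ⟩ := hT.exists_map_coord_pow_eq_mul
  obtain ⟨δ, hδ, hTδ⟩ := mem_calAn_iff.mp (hT.mapsTo (coord_pow_mem_calAn n.le_succ))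
  refine ⟨δ * γ, hδ.1.mul hγ.1, funext fun z => ?_, fun v hv => ?_⟩
  · simp only [hTδ, hTβ, Pi.mul_apply, Pi.pow_apply, coord_apply]
    linear_combination (-((z : ℂ) ^ n * δ z)) * hβγ z
  · rw [hTβ]
    exact mul_ne_zero (pow_ne_zero n hv) (left_ne_zero_of_mul_eq_one (hβγ v))

lemma norm_lt_one_of_map_coord_pow_succ_eq_mul {ρ : 𝔻 → ℂ} (hρ : HolOn ρ)
    (hTρ : T (coord ^ (n + 1)) = ρ * T (coord ^ n))
    (hne : ∀ v : 𝔻, (v : ℂ) ≠ 0 → T (coord ^ n) v ≠ 0) (v : 𝔻) : ‖ρ v‖ < 1 := by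
  have hle : ∀ z, ‖ρ z‖ ≤ 1 := hρ.norm_le_of_forall_coe_ne_zero fun z hz =>
    (hT.isCharacterOn_apply z).norm_le_one (hne z hz) (congrFun hTρ z)
  refine (hle v).lt_of_ne fun hv => ?_
  have hconst : ∀ z, ρ z = ρ v := hρ.eq_of_forall_norm_le fun z => hv ▸ hle z
  have hn := coord_pow_mem_calAn (le_refl n)
  refine coord_pow_succ_ne_smul n (ρ v) (hT.injOn (coord_pow_mem_calAn n.le_succ)
    ((calAnSubalgebra n).smul_mem _ hn) ?_)
  rw [hTρ, hT.map_smul _ _ hn]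
  exact funext fun z => by simp [hconst z]

lemma exists_eq_comp (hn : n ≠ 0) :
    ∃ φ : 𝔻 → 𝔻, HolOn (fun z => (φ z : ℂ)) ∧ φ 0 = 0 ∧ ∀ f ∈ calAn n, T f = f ∘ φ := by
  obtain ⟨ρ, hρ, hTρ, hne⟩ := hT.exists_map_coord_pow_succ_eq_mul
  set φ : 𝔻 → 𝔻 := fun z =>
    UnitDisc.mk (ρ z) (hT.norm_lt_one_of_map_coord_pow_succ_eq_mul hρ hTρ hne z)
  have hoff : ∀ f ∈ calAn n, ∀ v : 𝔻, (v : ℂ) ≠ 0 → T f v = f (φ v) := fun f hf v hv =>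
    (hT.isCharacterOn_apply v).apply_eq (hne v hv) (w := φ v) (congrFun hTρ v) hf
  have hpow := coord_pow_mem_calAn (le_refl n)
  have hρn : ρ ^ n = T (coord ^ n) := (hρ.pow n).eq_of_forall_coe_ne_zero (hT.mapsTo hpow).1.1
    fun v hv => by simpa [φ] using (hoff _ hpow v hv).symm
  have hφ0 : φ 0 = 0 := by
    have h0 := congrFun hρn 0
    rw [apply_zero_of_mem_calAn hn (hT.mapsTo hpow), Pi.pow_apply, pow_eq_zero_iff hn] at h0
    exact UnitDisc.coe_eq_zero.mp h0
  refine ⟨φ, hρ, hφ0, fun f hf => funext fun v => ?_⟩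
  rcases eq_or_ne (v : ℂ) 0 with hv | hv
  · rw [UnitDisc.coe_eq_zero.mp hv, Function.comp_apply, hφ0, apply_zero_of_mem_calAn hn hf,
      apply_zero_of_mem_calAn hn (hT.mapsTo hf)]
  · exact hoff f hf v hv

lemma exists_eq_comp_exp_smul (hn : n ≠ 0) :
    ∃ θ : ℝ, ∀ f ∈ calAn n, T f = fun z => f (Circle.exp θ • z) := by
  obtain ⟨S, hS, hTS⟩ := hT.exists_rightInverse (A := calAnSubalgebra n)
  obtain ⟨φ, ⟨Φ, hΦ, hΦφ : ∀ z : 𝔻, Φ z = φ z⟩, hφ0, hTφ⟩ := hT.exists_eq_comp hn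
  obtain ⟨ψ, ⟨Ψ, hΨ, hΨψ : ∀ z : 𝔻, Ψ z = ψ z⟩, hψ0, hSψ⟩ := hS.exists_eq_comp hn
  have hψφ : ∀ v, ψ (φ v) = v := fun v => eq_of_forall_mem_calAn_apply_eq fun f hf => by
    have := congrFun (hTS f hf) v
    rwa [hTφ _ (hS.mapsTo hf), hSψ f hf] at this
  have hmaps : ∀ {F : ℂ → ℂ} {g : 𝔻 → 𝔻}, (∀ z : 𝔻, F z = g z) →
      MapsTo F (ball 0 1) (ball 0 1) :=
    fun h => UnitDisc.forall_mem_ball_iff.mpr fun z => h z ▸ (_ : 𝔻).coe_mem_ball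
  set z₀ : 𝔻 := UnitDisc.mk (1 / 2) (by norm_num)
  obtain ⟨η, hη, hΦη⟩ := exists_eq_mul_of_comp_eq_self hΦ hΨ (hmaps hΦφ) (hmaps hΨψ)
    (by simpa [hφ0] using hΦφ 0) (by simpa [hψ0] using hΨψ 0) z₀.coe_mem_ball (by norm_num [z₀])
    (by rw [hΦφ z₀, hΨψ, hψφ])
  have hexp : (Circle.exp (arg η) : ℂ) = η := by
    simpa [hη, Circle.coe_exp] using norm_mul_exp_arg_mul_I η
  refine ⟨arg η, fun f hf => ?_⟩
  rw [hTφ f hf]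
  exact funext fun z => congrArg f <| UnitDisc.coe_injective <| by
    rw [← hΦφ, hΦη _ z.coe_mem_ball, UnitDisc.coe_circle_smul, hexp]

end IsAlgAutOn

/-- `T` is an algebra automorphism of `𝒜₀ⁿ` iff
`T f = f ∘ (z ↦ e^{iθ} z)` for some `θ ∈ ℝ`. -/
theorem stmt_3 (n : ℕ) (hn : 1 ≤ n) (T : (𝔻 → ℂ) → (𝔻 → ℂ)) :
    IsAlgAutOn (calAn n) T ↔
      ∃ θ : ℝ, ∃ φ : 𝔻 → 𝔻,
        (∀ z : 𝔻, (↑(φ z) : ℂ) = Complex.exp (θ * Complex.I) * ↑z) ∧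
        ∀ f ∈ calAn n, T f = f ∘ φ := by
  constructor
  · intro hT
    obtain ⟨θ, hθ⟩ := hT.exists_eq_comp_exp_smul (Nat.one_le_iff_ne_zero.mp hn)
    exact ⟨θ, (Circle.exp θ • ·), fun z => by rw [UnitDisc.coe_circle_smul, Circle.coe_exp], hθ⟩
  · rintro ⟨θ, φ, hφ, hTφ⟩
    have hφc : φ = MulAction.toPerm (Circle.exp θ) := funext fun z => UnitDisc.coe_injective <| by
      rw [hφ, MulAction.toPerm_apply, UnitDisc.coe_circle_smul, Circle.coe_exp]
    exact isAlgAutOn_of_eq_comp_equiv (A := calAnSubalgebra n) (MulAction.toPerm (Circle.exp θ))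
      (fun f hf => comp_smul_mem_calAn hf _) (fun f hf => comp_smul_mem_calAn hf _) (hφc ▸ hTφ)
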